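/- Let N ∈ ℕ and h = L/(N+1) with L > 0. For every y : Fin (N+2) → ℝ with y(0) = y(N+1) = 0, the discrete Poincaré inequality holds: h·∑_{i=1}^{N} y(i)² ≤ C·h·∑_{i=1}^{N} (-Δ_h y)(i)·y(i), where Δ_h y(i) = (y(i+1) - 2y(i) + y(i-1))/h² and C > 0 depends only on L (not on N or h). Equivalently, h·∑_{i=1}^N y(i)² ≤ C·h·∑_{i=0}^{N} ((y(i+1)-y(i))/h)². -/

import Mathlib

/-!
Since `y 0 = 0`, each value `y k` telescopes into a sum of `k` differences, so Cauchy–Schwarz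
gives `y k ^ 2 ≤ k * ∑ (y (j + 1) - y j) ^ 2`; summing over `k ≤ N` yields
`∑ y k ^ 2 ≤ (N + 1) ^ 2 * ∑ (y (j + 1) - y j) ^ 2`, which after scaling by `h = L / (N + 1)` is
the Poincaré inequality with `C = L ^ 2`. Summation by parts, using both boundary values,
identifies the Laplacian form `∑ (-Δ_h y) k * y k` with the same Dirichlet energy.
-/

open Finset

theorem sum_range_neg_second_diff_mul_eq_sum_sq_diff (N : ℕ) (Y : ℕ → ℝ) (h0 : Y 0 = 0)
    (hN : Y (N + 1) = 0) :
    ∑ k ∈ range N, -(Y (k + 2) - 2 * Y (k + 1) + Y k) * Y (k + 1)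
      = ∑ j ∈ range (N + 1), (Y (j + 1) - Y j) ^ 2 := by
  have hsplit : ∑ j ∈ range (N + 1), (Y (j + 1) - Y j) ^ 2
      = ∑ j ∈ range (N + 1), (Y (j + 1) - Y j) * Y (j + 1)
        - ∑ j ∈ range (N + 1), (Y (j + 1) - Y j) * Y j := by
    rw [← sum_sub_distrib]
    exact sum_congr rfl fun j _ => by ring
  rw [hsplit, sum_range_succ, sum_range_succ' (fun j => (Y (j + 1) - Y j) * Y j), hN, h0,
    mul_zero, mul_zero, add_zero, add_zero, ← sum_sub_distrib]
  exact sum_congr rfl fun k _ => by ring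

theorem sq_le_mul_sum_range_sq_diff (Y : ℕ → ℝ) (h0 : Y 0 = 0) (n : ℕ) :
    Y n ^ 2 ≤ n * ∑ j ∈ range n, (Y (j + 1) - Y j) ^ 2 := by
  have htelescope : Y n = ∑ j ∈ range n, (Y (j + 1) - Y j) := by
    rw [sum_range_sub, h0, sub_zero]
  simpa [htelescope] using
    sq_sum_le_card_mul_sum_sq (s := range n) (f := fun j => Y (j + 1) - Y j)

theorem sum_range_sq_le_sq_mul_sum_sq_diff (N : ℕ) (Y : ℕ → ℝ) (h0 : Y 0 = 0) :
    ∑ k ∈ range N, Y (k + 1) ^ 2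
      ≤ (N + 1 : ℝ) ^ 2 * ∑ j ∈ range (N + 1), (Y (j + 1) - Y j) ^ 2 := by
  set S := ∑ j ∈ range (N + 1), (Y (j + 1) - Y j) ^ 2
  have hS : 0 ≤ S := sum_nonneg fun j _ => sq_nonneg _
  have hterm : ∀ k ∈ range N, Y (k + 1) ^ 2 ≤ (N + 1 : ℝ) * S := by
    intro k hk
    have hkN : k + 1 ≤ N + 1 := by have := mem_range.mp hk; omega
    calc Y (k + 1) ^ 2 ≤ (k + 1 : ℕ) * ∑ j ∈ range (k + 1), (Y (j + 1) - Y j) ^ 2 :=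
          sq_le_mul_sum_range_sq_diff Y h0 (k + 1)
      _ ≤ (N + 1 : ℕ) * S := by
          gcongr
          exact sum_le_sum_of_subset_of_nonneg (range_subset_range.mpr hkN)
            fun j _ _ => sq_nonneg _
      _ = (N + 1 : ℝ) * S := by push_cast; ring
  calc ∑ k ∈ range N, Y (k + 1) ^ 2 ≤ N * ((N + 1 : ℝ) * S) := by
        simpa using sum_le_sum hterm
    _ ≤ (N + 1 : ℝ) ^ 2 * S := by nlinarith

theorem discrete_poincare (L : ℝ) (hL : 0 < L) :
    ∃ C > 0, ∀ (N : ℕ) (y : Fin (N + 2) → ℝ),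
      y 0 = 0 → y (Fin.last (N + 1)) = 0 →
      (L / (N + 1)) * ∑ k : Fin N, (y k.succ.castSucc) ^ 2
          ≤ C * ((L / (N + 1)) * ∑ k : Fin N,
              (-((y k.succ.succ - 2 * y k.succ.castSucc + y k.castSucc.castSucc)
                  / (L / (N + 1)) ^ 2)) * y k.succ.castSucc)
      ∧ (L / (N + 1)) * ∑ k : Fin N, (y k.succ.castSucc) ^ 2
          ≤ C * ((L / (N + 1)) * ∑ j : Fin (N + 1),
              ((y j.succ - y j.castSucc) / (L / (N + 1))) ^ 2) := by
  refine ⟨L ^ 2, by positivity, fun N y h0 hN => ?_⟩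
  -- `Fin.ofNat` wraps around, but only the values of `Y` on `0, …, N + 1` are ever used.
  set Y : ℕ → ℝ := fun n => y (Fin.ofNat (N + 2) n)
  have hY : ∀ i, y i = Y i := fun i => by simp only [Y, Fin.ofNat_val_eq_self]
  have hY0 : Y 0 = 0 := by simpa [Y] using h0
  have hYN : Y (N + 1) = 0 := by simpa [Y, Fin.last] using hN
  have hlap := sum_range_neg_second_diff_mul_eq_sum_sq_diff N Y hY0 hYN
  have hpoin := sum_range_sq_le_sq_mul_sum_sq_diff N Y hY0
  set h := L / (N + 1)
  simp only [hY, Fin.val_castSucc, Fin.val_succ, div_pow, div_mul_eq_mul_div, ← neg_div,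
    ← sum_div, Fin.sum_univ_eq_sum_range (fun k => Y (k + 1) ^ 2),
    Fin.sum_univ_eq_sum_range (fun k => -(Y (k + 2) - 2 * Y (k + 1) + Y k) * Y (k + 1)),
    Fin.sum_univ_eq_sum_range (fun k => (Y (k + 1) - Y k) ^ 2)]
  rw [hlap]
  set S := ∑ j ∈ range (N + 1), (Y (j + 1) - Y j) ^ 2
  have hscale : L ^ 2 * (h * (S / h ^ 2)) = h * ((N + 1) ^ 2 * S) := by
    simp only [h]
    field_simp
  have hbound : h * ∑ k ∈ range N, Y (k + 1) ^ 2 ≤ L ^ 2 * (h * (S / h ^ 2)) := by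
    rw [hscale]
    gcongr
  exact ⟨hbound, hbound⟩
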